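/- Let z₀ > 0, let t > 0, and let θ(z) = (z/4)(1/z₀² + 1/z²). Then for every u with 0 < u ≤ z₀ and z = z₀ + u·e^{iπ/4}, one has Re(2 i t θ(z)) ≤ − t u² / (2(2+√2) z₀³); in particular |e^{2 i t θ(z)}| ≤ exp(− t u² / (7 z₀³)). -/

import Mathlib

/-!
On the ray `z = z₀ + u e^{iπ/4}` one has `Re(2itθ(z)) = (t Im z / 2)(1/|z|² - 1/z₀²)`, with
`Im z = u/√2` and `|z|² = z₀² + √2 z₀ u + u²`. The difference `|z|² - z₀² = u(√2 z₀ + u)` gives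
the factor `u²`, and `|z|² ≤ (2 + √2) z₀ (z₀ + u/√2)`, valid for `u ≤ z₀`, turns the
remaining ratio into the constant `1 / (2(2 + √2) z₀³)`; finally `2(2 + √2) ≤ 7`.
-/

open Complex Real

noncomputable def phase (z₀ : ℝ) (z : ℂ) : ℂ := z / 4 * (1 / (z₀ : ℂ) ^ 2 + 1 / z ^ 2)

theorem phase_eq (z₀ : ℝ) (z : ℂ) : phase z₀ z = ((4 * z₀ ^ 2)⁻¹ : ℝ) * z + (4 * z)⁻¹ := by
  rcases eq_or_ne z 0 with rfl | hz
  · simp [phase]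
  · simp only [phase]
    push_cast
    field_simp

theorem re_two_I_mul_phase (z₀ t : ℝ) (z : ℂ) :
    (2 * I * t * phase z₀ z).re = t * z.im / 2 * (1 / normSq z - 1 / z₀ ^ 2) := by
  rw [phase_eq]
  simp only [mul_re, mul_im, add_im, ofReal_re, ofReal_im, I_re, I_im, re_ofNat, im_ofNat,
    inv_im, normSq_mul, normSq_ofNat]
  field_simp
  ring

theorem exp_I_mul_pi_div_four : exp (I * (π / 4)) = √2 / 2 + √2 / 2 * I := by
  rw [mul_comm, ← ofReal_ofNat, ← ofReal_div, exp_mul_I, ← ofReal_cos, ← ofReal_sin,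
    Real.cos_pi_div_four, Real.sin_pi_div_four]
  push_cast
  ring

theorem im_add_mul_exp_pi_div_four (z₀ u : ℝ) : ((z₀ : ℂ) + u * exp (I * (π / 4))).im = u * √2 / 2 := by
  simp [exp_I_mul_pi_div_four]
  ring

theorem normSq_add_mul_exp_pi_div_four (z₀ u : ℝ) :
    normSq ((z₀ : ℂ) + u * exp (I * (π / 4))) = z₀ ^ 2 + √2 * z₀ * u + u ^ 2 := by
  have hs : √2 ^ 2 = 2 := sq_sqrt zero_le_two
  simp [exp_I_mul_pi_div_four, normSq_apply]
  linear_combination u ^ 2 / 2 * hs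

theorem ray_decay_bound {z₀ t u : ℝ} (hz₀ : 0 < z₀) (ht : 0 ≤ t) (hu : 0 ≤ u) (huz : u ≤ z₀) :
    t * (u * √2 / 2) / 2 * (1 / (z₀ ^ 2 + √2 * z₀ * u + u ^ 2) - 1 / z₀ ^ 2) ≤
      -(t * u ^ 2) / (2 * (2 + √2) * z₀ ^ 3) := by
  have hs : √2 ^ 2 = 2 := sq_sqrt zero_le_two
  have hs0 : 0 ≤ √2 := sqrt_nonneg 2
  have hN : 0 < z₀ ^ 2 + √2 * z₀ * u + u ^ 2 := by positivity
  have hNle : z₀ ^ 2 + √2 * z₀ * u + u ^ 2 ≤ (2 + √2) * z₀ * (z₀ + u * √2 / 2) := by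
    nlinarith [mul_nonneg hz₀.le hu]
  have heq : t * (u * √2 / 2) / 2 * (1 / (z₀ ^ 2 + √2 * z₀ * u + u ^ 2) - 1 / z₀ ^ 2) =
      -(t * u ^ 2) * (z₀ + u * √2 / 2) / (2 * z₀ ^ 2 * (z₀ ^ 2 + √2 * z₀ * u + u ^ 2)) := by
    field_simp
    linear_combination -(t * u ^ 2 * z₀) * hs
  rw [heq, div_le_div_iff₀ (by positivity) (by positivity)]
  have := mul_le_mul_of_nonneg_left hNle (by positivity : 0 ≤ 2 * t * u ^ 2 * z₀ ^ 2)
  nlinarith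

theorem two_mul_two_add_sqrt_two_le_seven : 2 * (2 + √2) ≤ 7 := by
  nlinarith [sq_sqrt (zero_le_two : (0 : ℝ) ≤ 2), sqrt_nonneg 2]

/-- For `z₀ > 0`, `t > 0`, `0 < u ≤ z₀` and `z = z₀ + u·e^{iπ/4}`, with
`θ(z) = (z/4)(1/z₀² + 1/z²)`, one has `Re(2itθ(z)) ≤ − t u² / (2(2+√2) z₀³)`;
in particular `|e^{2itθ(z)}| ≤ exp(− t u² / (7 z₀³))`. -/
theorem stmt_2 (z₀ t u : ℝ) (hz₀ : 0 < z₀) (ht : 0 < t) (hu : 0 < u) (huz : u ≤ z₀)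
    (z : ℂ) (hz : z = (z₀ : ℂ) + (u : ℂ) * Complex.exp (Complex.I * ((Real.pi : ℂ) / 4))) :
    (2 * Complex.I * (t : ℂ) * (z / 4 * (1 / (z₀ : ℂ) ^ 2 + 1 / z ^ 2))).re ≤
        -(t * u ^ 2) / (2 * (2 + Real.sqrt 2) * z₀ ^ 3) ∧
      ‖(Complex.exp (2 * Complex.I * (t : ℂ) * (z / 4 * (1 / (z₀ : ℂ) ^ 2 + 1 / z ^ 2))))‖ ≤
        Real.exp (-(t * u ^ 2) / (7 * z₀ ^ 3)) := by
  have hre : (2 * I * t * phase z₀ z).re ≤ -(t * u ^ 2) / (2 * (2 + √2) * z₀ ^ 3) := by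
    rw [re_two_I_mul_phase, hz, im_add_mul_exp_pi_div_four, normSq_add_mul_exp_pi_div_four]
    exact ray_decay_bound hz₀ ht.le hu.le huz
  refine ⟨hre, ?_⟩
  rw [norm_exp, Real.exp_le_exp]
  refine hre.trans ?_
  rw [neg_div, neg_div, neg_le_neg_iff]
  exact div_le_div_of_nonneg_left (by positivity) (by positivity)
    (mul_le_mul_of_nonneg_right two_mul_two_add_sqrt_two_le_seven (by positivity))
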